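/- arXiv:1609.07664 — 3 statements merged into one kernel-verified Lean document; each statement's English description precedes it below -/
import Mathlib

section
/- Let c ∈ ℝ^d with c_1 ≥ c_2 ≥ ... ≥ c_d ≥ 0 and β > 0. Suppose there exists an index k* such that c_{k*+1} < (1/k*)(∑_{i=1}^{k*} c_i − β) ≤ c_{k*}. Then the vector z* with z*_i = t* for i ≤ k* and z*_i = c_i for i > k*, where t* = (1/k*)(∑_{i=1}^{k*} c_i − β), is the unique minimizer of z ↦ β‖z‖_∞ + (1/2)‖c − z‖_2². -/
/-- The objective `z ↦ β‖z‖_∞ + (1/2)‖c − z‖₂²` on `ℝ^d`. -/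
noncomputable def maxNormObj {d : ℕ} (hd : 0 < d) (β : ℝ) (c z : Fin d → ℝ) : ℝ :=
  β * (Finset.univ.sup' ⟨⟨0, hd⟩, Finset.mem_univ _⟩ fun i => |z i|)
    + (1 / 2) * ∑ i, (c i - z i) ^ 2

/-- if `c₁ ≥ ⋯ ≥ c_d ≥ 0`, `β > 0` and there is `k*` (1-based) with
`c_{k*+1} < t* ≤ c_{k*}` where `t* = (1/k*)(∑_{i=1}^{k*} c_i − β)`, then the vector
equal to `t*` on the first `k*` coordinates and to `c` afterwards is the unique
minimizer of `z ↦ β‖z‖_∞ + (1/2)‖c − z‖₂²`. (0-based indexing: entries `i < k`.) -/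
theorem stmt0 {d : ℕ} (hd : 0 < d) (c : Fin d → ℝ) (β : ℝ) (hβ : 0 < β)
    (hmono : ∀ i j : Fin d, i ≤ j → c j ≤ c i) (hnonneg : ∀ i, 0 ≤ c i)
    (k : ℕ) (hk1 : 1 ≤ k) (hkd : k < d)
    (t : ℝ) (ht : t = ((∑ i : Fin d, if i.val < k then c i else 0) - β) / k)
    (hlt : c ⟨k, hkd⟩ < t) (hle : t ≤ c ⟨k - 1, by omega⟩)
    (z : Fin d → ℝ) (hz : z = fun i => if i.val < k then t else c i) :
    ∀ w : Fin d → ℝ, w ≠ z → maxNormObj hd β c z < maxNormObj hd β c w := by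
  intro w hw
  have hk0 : (0:ℝ) < k := by exact_mod_cast hk1
  have ht' : (k:ℝ) * t = (∑ i : Fin d, if i.val < k then c i else 0) - β := by
    rw [ht]; field_simp
  have ht0 : 0 < t := lt_of_le_of_lt (hnonneg _) hlt
  -- c i ≥ t for i < k
  have hge : ∀ i : Fin d, i.val < k → t ≤ c i := by
    intro i hi
    refine le_trans hle (hmono i ⟨k - 1, by omega⟩ ?_)
    simpa [Fin.le_def] using by omega
  -- c i < t for i ≥ k
  have hlt' : ∀ i : Fin d, k ≤ i.val → c i < t := by
    intro i hi
    exact lt_of_le_of_lt (hmono ⟨k, hkd⟩ i (by simpa [Fin.le_def] using hi)) hlt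
  -- sup of |z| is t
  have hne : (Finset.univ : Finset (Fin d)).Nonempty := ⟨⟨0, hd⟩, Finset.mem_univ _⟩
  have hsupz : (Finset.univ.sup' ⟨⟨0, hd⟩, Finset.mem_univ _⟩ fun i => |z i|) = t := by
    apply le_antisymm
    · apply Finset.sup'_le
      intro i _
      subst hz
      by_cases hi : i.val < k
      · simp [hi, abs_of_pos ht0]
      · simp only [hi, if_neg, ite_false]
        rw [abs_of_nonneg (hnonneg i)]
        exact le_of_lt (hlt' i (by omega))
    · have h0 : |z ⟨0, hd⟩| = t := by
        subst hz; simp only []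
        rw [if_pos (by omega : (0:ℕ) < k), abs_of_pos ht0]
      calc t = |z ⟨0, hd⟩| := h0.symm
        _ ≤ _ := Finset.le_sup' (f := fun i => |z i|) (Finset.mem_univ ⟨0, hd⟩)
  set M : ℝ := Finset.univ.sup' ⟨⟨0, hd⟩, Finset.mem_univ _⟩ fun i => |w i| with hM
  have hwM : ∀ i, w i ≤ M :=
    fun i => le_trans (le_abs_self _) (Finset.le_sup' (f := fun i => |w i|) (Finset.mem_univ i))
  -- cross term
  have hcard : (Finset.univ.filter fun i : Fin d => i.val < k).card = k := by
    have : (Finset.univ.filter fun i : Fin d => i.val < k) = Finset.Iio ⟨k, hkd⟩ := by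
      ext i; simp [Fin.lt_def]
    rw [this, Fin.card_Iio]
  have hcross : β * (t - M) ≤ ∑ i, (z i - c i) * (w i - z i) := by
    have heq : ∑ i, (z i - c i) * (w i - z i)
        = ∑ i, (if i.val < k then (t - c i) * (w i - t) else 0) := by
      apply Finset.sum_congr rfl
      intro i _
      subst hz
      by_cases hi : i.val < k <;> simp [hi]
    rw [heq]
    have hbd : ∀ i : Fin d, (if i.val < k then (t - c i) * (M - t) else 0)
        ≤ (if i.val < k then (t - c i) * (w i - t) else 0) := by
      intro i
      by_cases hi : i.val < k
      · simp only [hi, if_pos]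
        exact mul_le_mul_of_nonpos_left (by linarith [hwM i]) (by linarith [hge i hi])
      · simp [hi]
    refine le_trans (le_of_eq ?_) (Finset.sum_le_sum fun i _ => hbd i)
    have : ∑ i : Fin d, (if i.val < k then (t - c i) * (M - t) else 0)
        = (∑ i : Fin d, (if i.val < k then (t - c i) else 0)) * (M - t) := by
      rw [Finset.sum_mul]
      apply Finset.sum_congr rfl
      intro i _
      by_cases hi : i.val < k <;> simp [hi]
    rw [this]
    have hsum : (∑ i : Fin d, (if i.val < k then (t - c i) else 0)) = -β := by
      have h1 : (∑ i : Fin d, (if i.val < k then (t - c i) else 0))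
          = (∑ i : Fin d, (if i.val < k then t else 0))
            - (∑ i : Fin d, (if i.val < k then c i else 0)) := by
        rw [← Finset.sum_sub_distrib]
        apply Finset.sum_congr rfl
        intro i _
        by_cases hi : i.val < k <;> simp [hi]
      have h2 : (∑ i : Fin d, (if i.val < k then (t : ℝ) else 0)) = (k : ℝ) * t := by
        rw [Finset.sum_ite, Finset.sum_const_zero, add_zero, Finset.sum_const, hcard]
        simp [mul_comm]
      rw [h1, h2]
      linarith [ht']
    rw [hsum]; ring_nf
  -- quadratic expansion
  have hquad : ∑ i, (c i - w i) ^ 2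
      = (∑ i, (c i - z i) ^ 2) + 2 * (∑ i, (z i - c i) * (w i - z i))
        + (∑ i, (w i - z i) ^ 2) := by
    rw [Finset.mul_sum, ← Finset.sum_add_distrib, ← Finset.sum_add_distrib]
    apply Finset.sum_congr rfl
    intro i _; ring
  -- positivity of ‖w − z‖²
  have hpos : 0 < ∑ i, (w i - z i) ^ 2 := by
    obtain ⟨i0, hi0⟩ : ∃ i, w i ≠ z i := by
      by_contra h; push_neg at h; exact hw (funext h)
    apply Finset.sum_pos' (fun i _ => sq_nonneg _)
    exact ⟨i0, Finset.mem_univ _, by have := sub_ne_zero.mpr hi0; positivity⟩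
  have hβM : β * (M - t) + (∑ i, (z i - c i) * (w i - z i)) ≥ 0 := by
    nlinarith [hcross]
  simp only [maxNormObj, hsupz, ← hM]
  nlinarith [hquad, hpos, hβM]
end

section
/- Let c ∈ ℝ^d with c_1 ≥ c_2 ≥ ... ≥ c_d ≥ 0 and β > 0. Any minimizer z of the function z ↦ β‖z‖_∞ + (1/2)‖c − z‖_2² satisfies z_1 ≥ z_2 ≥ ... ≥ z_d ≥ 0. -/
/-- if `c₁ ≥ ⋯ ≥ c_d ≥ 0` and `β > 0`, then any minimizer `z` of
`z ↦ β‖z‖_∞ + (1/2)‖c − z‖₂²` satisfies `z₁ ≥ z₂ ≥ ⋯ ≥ z_d ≥ 0`. -/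
theorem stmt2 {d : ℕ} (hd : 0 < d) (c : Fin d → ℝ) (β : ℝ) (hβ : 0 < β)
    (hmono : ∀ i j : Fin d, i ≤ j → c j ≤ c i) (hnonneg : ∀ i, 0 ≤ c i)
    (z : Fin d → ℝ) (hmin : ∀ w : Fin d → ℝ, maxNormObj hd β c z ≤ maxNormObj hd β c w) :
    (∀ i j : Fin d, i ≤ j → z j ≤ z i) ∧ (∀ i, 0 ≤ z i) := by
  have hne : (Finset.univ : Finset (Fin d)).Nonempty := ⟨⟨0, hd⟩, Finset.mem_univ _⟩
  set S : ℝ := Finset.univ.sup' ⟨⟨0, hd⟩, Finset.mem_univ _⟩ fun i => |z i| with hS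
  have hSle : ∀ k, |z k| ≤ S := fun k => Finset.le_sup' (fun k => |z k|) (Finset.mem_univ k)
  constructor
  · intro i j hij
    by_contra h
    push_neg at h
    have hijne : i ≠ j := by rintro rfl; exact lt_irrefl _ h
    have hc : c j ≤ c i := hmono i j hij
    set m' : ℝ := (z i + z j) / 2 with hm'
    set w : Fin d → ℝ := fun k => if k = i ∨ k = j then m' else z k with hw
    -- sup bound
    have hsup : (Finset.univ.sup' ⟨⟨0, hd⟩, Finset.mem_univ _⟩ fun k => |w k|) ≤ S := by
      apply Finset.sup'_le
      intro k _
      by_cases hk : k = i ∨ k = j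
      · have : w k = m' := by simp [hw, hk]
        rw [this]
        have h1 : |m'| ≤ (|z i| + |z j|) / 2 := by
          rw [hm']
          calc |(z i + z j) / 2| = |z i + z j| / 2 := by rw [abs_div]; norm_num
            _ ≤ (|z i| + |z j|) / 2 := by
                apply div_le_div_of_nonneg_right (abs_add_le _ _)
                norm_num
        linarith [hSle i, hSle j]
      · have : w k = z k := by simp [hw, hk]
        rw [this]; exact hSle k
    -- quadratic sum strict decrease
    have hsum : ∑ k, (c k - w k) ^ 2 < ∑ k, (c k - z k) ^ 2 := by
      have hsub : ({i, j} : Finset (Fin d)) ⊆ Finset.univ := Finset.subset_univ _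
      have hsplitw := Finset.sum_sdiff (f := fun k => (c k - w k) ^ 2) hsub
      have hsplitz := Finset.sum_sdiff (f := fun k => (c k - z k) ^ 2) hsub
      have hout : ∑ k ∈ Finset.univ \ {i, j}, (c k - w k) ^ 2
          = ∑ k ∈ Finset.univ \ {i, j}, (c k - z k) ^ 2 := by
        apply Finset.sum_congr rfl
        intro k hk
        rw [Finset.mem_sdiff, Finset.mem_insert, Finset.mem_singleton] at hk
        push_neg at hk
        have : w k = z k := by simp [hw, hk.2.1, hk.2.2]
        rw [this]
      have hpairw : ∑ k ∈ ({i, j} : Finset (Fin d)), (c k - w k) ^ 2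
          = (c i - w i) ^ 2 + (c j - w j) ^ 2 := Finset.sum_pair hijne
      have hpairz : ∑ k ∈ ({i, j} : Finset (Fin d)), (c k - z k) ^ 2
          = (c i - z i) ^ 2 + (c j - z j) ^ 2 := Finset.sum_pair hijne
      have hwi : w i = m' := by simp [hw]
      have hwj : w j = m' := by simp [hw]
      have key : (c i - m') ^ 2 + (c j - m') ^ 2 < (c i - z i) ^ 2 + (c j - z j) ^ 2 := by
        have hb : (0:ℝ) < z j - z i := by linarith
        rw [hm']
        nlinarith [mul_pos hb hb, mul_nonneg (sub_nonneg.2 hc) hb.le]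
      rw [← hsplitw, ← hsplitz, hout, hpairw, hpairz, hwi, hwj]
      linarith
    have hobj : maxNormObj hd β c w < maxNormObj hd β c z := by
      unfold maxNormObj
      have h1 : β * (Finset.univ.sup' ⟨⟨0, hd⟩, Finset.mem_univ _⟩ fun k => |w k|) ≤ β * S :=
        mul_le_mul_of_nonneg_left hsup hβ.le
      rw [← hS]
      linarith
    exact absurd (hmin w) (not_le.2 hobj)
  · intro i
    by_contra h
    push_neg at h
    set w : Fin d → ℝ := Function.update z i 0 with hw
    have hsup : (Finset.univ.sup' ⟨⟨0, hd⟩, Finset.mem_univ _⟩ fun k => |w k|) ≤ S := by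
      apply Finset.sup'_le
      intro k _
      by_cases hk : k = i
      · subst hk
        have : w k = 0 := by simp [hw]
        rw [this]
        simpa using (abs_nonneg (z k)).trans (hSle k)
      · have : w k = z k := by simp [hw, hk]
        rw [this]; exact hSle k
    have hsum : ∑ k, (c k - w k) ^ 2 < ∑ k, (c k - z k) ^ 2 := by
      apply Finset.sum_lt_sum
      · intro k _
        by_cases hk : k = i
        · subst hk
          have : w k = 0 := by simp [hw]
          rw [this]
          nlinarith [hnonneg k, h]
        · have : w k = z k := by simp [hw, hk]
          rw [this]
      · refine ⟨i, Finset.mem_univ i, ?_⟩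
        have : w i = 0 := by simp [hw]
        rw [this]
        nlinarith [hnonneg i, h]
    have hobj : maxNormObj hd β c w < maxNormObj hd β c z := by
      unfold maxNormObj
      have h1 : β * (Finset.univ.sup' ⟨⟨0, hd⟩, Finset.mem_univ _⟩ fun k => |w k|) ≤ β * S :=
        mul_le_mul_of_nonneg_left hsup hβ.le
      rw [← hS]
      linarith
    exact absurd (hmin w) (not_le.2 hobj)
end

section
/- Let Z = [[Z¹¹, Z¹²],[(Z¹²)ᵀ, Z²²]] be a positive semidefinite matrix in ℝ^{(d₁+d₂)×(d₁+d₂)}. Then the nuclear norm of the off-diagonal block satisfies ‖Z¹²‖_* ≤ (1/2)(Trace(Z¹¹) + Trace(Z²²)). -/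
/-- The nuclear norm of a real matrix: the sum of its singular values, i.e. the sum of
the square roots of the eigenvalues of `Mᵀ M`. -/
noncomputable def nuclearNorm {d₁ d₂ : ℕ} (M : Matrix (Fin d₁) (Fin d₂) ℝ) : ℝ :=
  ∑ i, Real.sqrt ((Matrix.isHermitian_conjTranspose_mul_self M).eigenvalues i)

/-!
Let `V` be an orthogonal matrix diagonalizing `MᵀM` as `diag(σᵢ²)` and put `U = M V Σ⁺`.
Then `U` is a partial isometry and `Uᵀ M V = Σ`, so `‖M‖_* = tr(Uᵀ M V)`. Testing the
positivity of `Z` against the stacked matrix `[U; -V]` gives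
`2 tr(Uᵀ M V) ≤ tr(Uᵀ Z¹¹ U) + tr(Vᵀ Z²² V)`, and compressing a positive semidefinite matrix
by a partial isometry does not increase its trace.
-/

namespace Matrix

variable {m n k : Type*}

theorem PosSemidef.toBlocks₁₁ {Z : Matrix (m ⊕ n) (m ⊕ n) ℝ} (hZ : Z.PosSemidef) :
    Z.toBlocks₁₁.PosSemidef :=
  hZ.submatrix Sum.inl

theorem PosSemidef.toBlocks₂₂ {Z : Matrix (m ⊕ n) (m ⊕ n) ℝ} (hZ : Z.PosSemidef) :
    Z.toBlocks₂₂.PosSemidef :=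
  hZ.submatrix Sum.inr

variable [Fintype m] [Fintype n] [Fintype k]

theorem PosSemidef.two_mul_trace_toBlocks₁₂_le {Z : Matrix (m ⊕ n) (m ⊕ n) ℝ}
    (hZ : Z.PosSemidef) (X : Matrix m k ℝ) (Y : Matrix n k ℝ) :
    2 * (Xᵀ * Z.toBlocks₁₂ * Y).trace ≤
      (Xᵀ * Z.toBlocks₁₁ * X).trace + (Yᵀ * Z.toBlocks₂₂ * Y).trace := by
  have h₂₁ : Z.toBlocks₂₁ = Z.toBlocks₁₂ᵀ := by
    ext i j
    simpa [toBlocks₂₁, toBlocks₁₂] using hZ.isHermitian.apply (Sum.inl j) (Sum.inr i)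
  have hW := (hZ.conjTranspose_mul_mul_same (fromRows X (-Y))).trace_nonneg
  rw [← fromBlocks_toBlocks Z, conjTranspose_eq_transpose_of_trivial, transpose_fromRows,
    fromCols_mul_fromBlocks, fromCols_mul_fromRows, h₂₁] at hW
  have hsym : (Yᵀ * Z.toBlocks₁₂ᵀ * X).trace = (Xᵀ * Z.toBlocks₁₂ * Y).trace := by
    rw [← trace_transpose]
    simp [Matrix.mul_assoc]
  simp only [transpose_neg, Matrix.neg_mul, Matrix.mul_neg, Matrix.add_mul, trace_add,
    trace_neg, hsym] at hW
  linarith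

theorem PosSemidef.trace_transpose_mul_mul_le {B : Matrix m m ℝ} (hB : B.PosSemidef)
    {U : Matrix m n ℝ} (hU : U * Uᵀ * U = U) : (Uᵀ * B * U).trace ≤ B.trace := by
  classical
  set Q : Matrix m m ℝ := 1 - U * Uᵀ
  have hQ_symm : Qᵀ = Q := by simp [Q]
  have hQ_idem : Q * Q = Q := by
    simp only [Q, Matrix.sub_mul, Matrix.mul_sub, Matrix.one_mul, Matrix.mul_one]
    rw [← Matrix.mul_assoc, hU]
    abel
  have hQ : 0 ≤ (B * Q).trace := by
    have := (hB.conjTranspose_mul_mul_same Q).trace_nonneg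
    rwa [conjTranspose_eq_transpose_of_trivial, hQ_symm, trace_mul_cycle, hQ_idem,
      trace_mul_comm] at this
  calc (Uᵀ * B * U).trace = B.trace - (B * Q).trace := by
        rw [Matrix.mul_sub, trace_sub, Matrix.mul_one, sub_sub_cancel, Matrix.mul_assoc,
          trace_mul_comm, Matrix.mul_assoc]
    _ ≤ B.trace := by linarith

section SingularValues

variable [DecidableEq n] (M : Matrix m n ℝ)

noncomputable def singularValues : n → ℝ :=
  fun i ↦ √((isHermitian_conjTranspose_mul_self M).eigenvalues i)

noncomputable def rightSingularVectors : Matrix n n ℝ :=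
  (isHermitian_conjTranspose_mul_self M).eigenvectorUnitary

/-- Columns with `σᵢ = 0` vanish, since `0⁻¹ = 0`; this makes it a partial isometry. -/
noncomputable def leftSingularVectors : Matrix m n ℝ :=
  M * M.rightSingularVectors * diagonal M.singularValues⁻¹

theorem rightSingularVectors_mul_transpose :
    M.rightSingularVectors * M.rightSingularVectorsᵀ = 1 :=
  Unitary.coe_mul_star_self (isHermitian_conjTranspose_mul_self M).eigenvectorUnitary

theorem rightSingularVectors_mul_transpose_mul :
    M.rightSingularVectors * M.rightSingularVectorsᵀ * M.rightSingularVectors =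
      M.rightSingularVectors := by
  rw [rightSingularVectors_mul_transpose, Matrix.one_mul]

theorem transpose_rightSingularVectors_mul_mul :
    M.rightSingularVectorsᵀ * (Mᵀ * M) * M.rightSingularVectors =
      diagonal (M.singularValues ^ 2) := by
  have h := (isHermitian_conjTranspose_mul_self M).conjStarAlgAut_star_eigenvectorUnitary
  rw [Unitary.conjStarAlgAut_star_apply] at h
  refine h.trans (congrArg diagonal (funext fun i ↦ ?_))
  exact (Real.sq_sqrt ((posSemidef_conjTranspose_mul_self M).eigenvalues_nonneg i)).symm

theorem transpose_leftSingularVectors_mul_mul :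
    M.leftSingularVectorsᵀ * M * M.rightSingularVectors = diagonal M.singularValues := by
  have hσ : diagonal M.singularValues⁻¹ * diagonal (M.singularValues ^ 2) =
      diagonal M.singularValues := by
    rw [diagonal_mul_diagonal]
    refine congrArg diagonal (funext fun i ↦ ?_)
    simp only [Pi.inv_apply, Pi.pow_apply]
    rcases eq_or_ne (M.singularValues i) 0 with h | h
    · simp [h]
    · field_simp
  rw [leftSingularVectors, transpose_mul, transpose_mul, diagonal_transpose, ← hσ,
    ← transpose_rightSingularVectors_mul_mul]
  simp only [Matrix.mul_assoc]

theorem leftSingularVectors_mul_transpose_mul :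
    M.leftSingularVectors * M.leftSingularVectorsᵀ * M.leftSingularVectors =
      M.leftSingularVectors := by
  have hσ : diagonal M.singularValues⁻¹ * (diagonal M.singularValues *
      diagonal M.singularValues⁻¹) = diagonal M.singularValues⁻¹ := by
    rw [diagonal_mul_diagonal, diagonal_mul_diagonal]
    refine congrArg diagonal (funext fun i ↦ ?_)
    simpa [mul_assoc] using mul_inv_mul_cancel (M.singularValues i)⁻¹
  have hUU : M.leftSingularVectorsᵀ * M.leftSingularVectors =
      diagonal M.singularValues * diagonal M.singularValues⁻¹ := by
    rw [← transpose_leftSingularVectors_mul_mul]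
    simp only [leftSingularVectors, Matrix.mul_assoc]
  rw [Matrix.mul_assoc, hUU, leftSingularVectors, Matrix.mul_assoc, hσ]

end SingularValues

end Matrix

theorem nuclearNorm_eq_sum_singularValues {d₁ d₂ : ℕ} (M : Matrix (Fin d₁) (Fin d₂) ℝ) :
    nuclearNorm M = ∑ i, M.singularValues i :=
  rfl

/-- if `Z = [[Z¹¹, Z¹²],[(Z¹²)ᵀ, Z²²]]` is positive semidefinite, then
`‖Z¹²‖_* ≤ (1/2)(Trace Z¹¹ + Trace Z²²)`. -/
theorem stmt13 {d₁ d₂ : ℕ}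
    (Z : Matrix (Fin d₁ ⊕ Fin d₂) (Fin d₁ ⊕ Fin d₂) ℝ) (hZ : Z.PosSemidef) :
    nuclearNorm Z.toBlocks₁₂ ≤ (1 / 2) * (Z.toBlocks₁₁.trace + Z.toBlocks₂₂.trace) := by
  set M := Z.toBlocks₁₂
  have key := hZ.two_mul_trace_toBlocks₁₂_le M.leftSingularVectors M.rightSingularVectors
  rw [M.transpose_leftSingularVectors_mul_mul, Matrix.trace_diagonal] at key
  have h₁₁ := hZ.toBlocks₁₁.trace_transpose_mul_mul_le M.leftSingularVectors_mul_transpose_mul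
  have h₂₂ := hZ.toBlocks₂₂.trace_transpose_mul_mul_le M.rightSingularVectors_mul_transpose_mul
  rw [nuclearNorm_eq_sum_singularValues]
  linarith
end
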